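/- For every z₀ ∈ ℂ \ {0} and ρ, ε ∈ ℝ with ρ > 0 and |ε| ≤ 1/3, suppose 1 - λ + λ|z₀| ≥ 20, and define ρ' ≥ 0, ε' ∈ ℝ by D_{z₀}F_λ(ρ z₀(i + ε)) = F_λ(z₀) ρ'(i + ε'). Then |ε' − ε/2| < 1/6; in particular |ε'| ≤ 1/3, i.e. the unstable cone K(z₀) = {z₀ρ(i+ε) : ρ ≥ 0, |ε| ≤ 1/3} is mapped into the interior of K(F_λ(z₀)) (together with the zero vector). -/

import Mathlib

noncomputable def Fl (l : ℝ) (z : ℂ) : ℂ :=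
  ((1 - l + l * ‖z‖ : ℝ) : ℂ) * (z / (‖z‖ : ℂ)) ^ 2 + 1

/-!
Dividing the decomposition by `ρ F_λ(z₀)` gives `w (ε t + 2i) = (ρ'/ρ) (i + ε')` with
`w = 1 - 1/F_λ(z₀)` and `t = λ|z₀| / (1 - λ + λ|z₀|) ∈ [19/20, 1]`. As `|F_λ(z₀)| ≥ 19`, `w` is
within `1/19` of `1`, so the error `η = (w - 1)(ε t + 2i)` has size at most `7/57`. Comparing
imaginary parts gives `ρ'/ρ = 2 + Im η ≥ 107/57`, while `(ρ'/ρ)(ε' - ε/2) = ε(t - 1) + Re η - (ε/2) Im η`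
is at most `1/60 + 49/342`, well below `107/342`.
-/

open Complex

theorem abs_sub_half_lt_of_mul_eq {w : ℂ} {t ε s ε' : ℝ} (hw : ‖w - 1‖ ≤ 1 / 19)
    (ht : t ∈ Set.Icc (19 / 20 : ℝ) 1) (hε : |ε| ≤ 1 / 3)
    (h : w * (ε * t + 2 * I) = s * (I + ε')) : |ε' - ε / 2| < 1 / 6 := by
  set v : ℂ := ε * t + 2 * I
  set η := (w - 1) * v
  have hv : ‖v‖ ≤ 7 / 3 := calc
    ‖v‖ ≤ ‖(ε * t : ℂ)‖ + ‖2 * I‖ := norm_add_le _ _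
    _ = |ε| * |t| + 2 := by simp
    _ ≤ 1 / 3 * 1 + 2 := by
        gcongr
        rw [abs_of_nonneg (by linarith [ht.1])]; exact ht.2
    _ = 7 / 3 := by norm_num
  have hη : ‖η‖ ≤ 7 / 57 := calc
    ‖η‖ = ‖w - 1‖ * ‖v‖ := norm_mul _ _
    _ ≤ 1 / 19 * (7 / 3) := by gcongr
    _ = 7 / 57 := by norm_num
  have hre := (abs_re_le_norm η).trans hη
  have him := (abs_im_le_norm η).trans hη
  have hwv : v + η = s * (I + ε') := by rw [← h]; ring
  have hs : 2 + η.im = s := by simpa [v] using congrArg im hwv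
  have hsε' : ε * t + η.re = s * ε' := by simpa [v] using congrArg re hwv
  have hnum : s * (ε' - ε / 2) = ε * (t - 1) + (η.re - ε / 2 * η.im) := by
    linear_combination -hsε' + (ε / 2) * hs
  have hs_pos : 107 / 57 ≤ s := by linarith [(abs_le.mp him).1]
  have hnum_le : |s * (ε' - ε / 2)| ≤ 1 / 60 + 7 / 6 * (7 / 57) := by
    rw [hnum]
    have htε : |ε * (t - 1)| ≤ 1 / 60 := by
      have ht1 : |t - 1| ≤ 1 / 20 := abs_le.mpr ⟨by linarith [ht.1], by linarith [ht.2]⟩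
      calc |ε * (t - 1)| = |ε| * |t - 1| := abs_mul _ _
        _ ≤ 1 / 3 * (1 / 20) := by gcongr
        _ ≤ 1 / 60 := by norm_num
    have hηε : |η.re - ε / 2 * η.im| ≤ 7 / 6 * (7 / 57) := calc
      |η.re - ε / 2 * η.im| ≤ |η.re| + |ε| / 2 * |η.im| := by
        simpa [abs_mul, abs_div] using abs_sub η.re (ε / 2 * η.im)
      _ ≤ 7 / 57 + 1 / 3 / 2 * (7 / 57) := by gcongr
      _ = 7 / 6 * (7 / 57) := by norm_num
    exact (abs_add_le _ _).trans (add_le_add htε hηε)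
  rw [abs_mul, abs_of_pos (by linarith)] at hnum_le
  nlinarith [abs_nonneg (ε' - ε / 2)]

theorem norm_Fl_sub_one {z : ℂ} (hz : z ≠ 0) (l : ℝ) :
    ‖Fl l z - 1‖ = |1 - l + l * ‖z‖| := by
  have hunit : ‖z / (‖z‖ : ℂ)‖ = 1 := by simp [hz]
  rw [Fl, add_sub_cancel_right, norm_mul, norm_pow, hunit, one_pow, mul_one, Complex.norm_real,
    Real.norm_eq_abs]

theorem le_norm_Fl {z : ℂ} (hz : z ≠ 0) {l : ℝ} (h20 : 20 ≤ 1 - l + l * ‖z‖) :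
    19 ≤ ‖Fl l z‖ := by
  have h := norm_sub_le (Fl l z) 1
  rw [norm_Fl_sub_one hz, abs_of_pos (by linarith), norm_one] at h
  linarith

theorem stmt_17_general (l : ℝ) (hl : l ∈ Set.Ioo (0 : ℝ) 1) (z₀ : ℂ) (hz : z₀ ≠ 0)
    (h20 : 20 ≤ 1 - l + l * ‖z₀‖)
    (ρ ε ρ' ε' : ℝ) (hρ : 0 < ρ) (hε : |ε| ≤ 1 / 3)
    (hdec : (Fl l z₀ - 1) *
        (((ρ * ε * l * ‖z₀‖ / (1 - l + l * ‖z₀‖) : ℝ) : ℂ)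
          + 2 * (ρ : ℂ) * Complex.I)
      = Fl l z₀ * (ρ' : ℂ) * (Complex.I + (ε' : ℂ))) :
    |ε' - ε / 2| < 1 / 6 ∧ |ε'| ≤ 1 / 3 := by
  set A := 1 - l + l * ‖z₀‖
  set F := Fl l z₀
  have hF : 19 ≤ ‖F‖ := le_norm_Fl hz h20
  have hF0 : F ≠ 0 := norm_pos_iff.mp (by linarith)
  have hw : ‖(F - 1) / F - 1‖ ≤ 1 / 19 := by
    rw [div_sub_one hF0, sub_sub_cancel_left, norm_div, norm_neg, norm_one]
    exact one_div_le_one_div_of_le (by norm_num) hF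
  have ht : l * ‖z₀‖ / A ∈ Set.Icc (19 / 20 : ℝ) 1 := by
    rw [Set.mem_Icc, le_div_iff₀ (by linarith), div_le_one (by linarith)]
    constructor <;> linarith [hl.1, hl.2]
  have hmul : (F - 1) / F * (ε * (l * ‖z₀‖ / A : ℝ) + 2 * I) = (ρ' / ρ : ℝ) * (I + ε') := by
    have hρ0 : (ρ : ℂ) ≠ 0 := by exact_mod_cast hρ.ne'
    have hA0 : (A : ℂ) ≠ 0 := by exact_mod_cast (show A ≠ 0 by linarith)
    push_cast at hdec ⊢
    field_simp at hdec ⊢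
    linear_combination hdec
  have hcone := abs_sub_half_lt_of_mul_eq hw ht hε hmul
  refine ⟨hcone, ?_⟩
  have hrev := abs_sub_abs_le_abs_sub ε' (ε / 2)
  rw [abs_div, abs_two] at hrev
  linarith

/-- Invariance of the unstable cone: if 1 - λ + λ|z₀| ≥ 20 and one writes
D_{z₀}F_λ(ρz₀(i+ε)) = F_λ(z₀)ρ'(i+ε') with ρ > 0, |ε| ≤ 1/3, ρ' ≥ 0, then
|ε' − ε/2| < 1/6; in particular |ε'| ≤ 1/3. -/
theorem stmt_17 (l : ℝ) (hl : l ∈ Set.Ioo (0 : ℝ) 1) (z₀ : ℂ) (hz : z₀ ≠ 0)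
    (h20 : 20 ≤ 1 - l + l * ‖z₀‖)
    (ρ ε ρ' ε' : ℝ) (hρ : 0 < ρ) (hε : |ε| ≤ 1 / 3) (hρ' : 0 ≤ ρ')
    (hdec : (Fl l z₀ - 1) *
        (((ρ * ε * l * ‖z₀‖ / (1 - l + l * ‖z₀‖) : ℝ) : ℂ)
          + 2 * (ρ : ℂ) * Complex.I)
      = Fl l z₀ * (ρ' : ℂ) * (Complex.I + (ε' : ℂ))) :
    |ε' - ε / 2| < 1 / 6 ∧ |ε'| ≤ 1 / 3 :=
  stmt_17_general l hl z₀ hz h20 ρ ε ρ' ε' hρ hε hdec
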